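/- Let p : ℬ → 𝒜 be a morphism of R-linear fibered categories on a site (𝒰, 𝒯) which satisfies (G), (F) and (FF). If 𝒜 is algebroid, then so is ℬ. -/

import Mathlib

open CategoryTheory Limits

universe w v₂ u₂ v₁ u₁ u₀

/-- A covering system `𝒯` on a category `𝒰`: for each object `U` a collection of
coverings (families of morphisms into `U`, encoded as presieves), containing the
identity families and stable under composition (transitivity). -/
structure CoveringSystem (𝒰 : Type u₁) [Category.{v₁} 𝒰] where
  covers : ∀ U : 𝒰, Set (Presieve U)
  id_mem : ∀ U : 𝒰, Presieve.singleton (𝟙 U) ∈ covers U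
  bind_mem : ∀ ⦃U : 𝒰⦄ (S : Presieve U), S ∈ covers U →
    ∀ (T : ∀ ⦃V : 𝒰⦄ ⦃f : V ⟶ U⦄, S f → Presieve V),
      (∀ ⦃V : 𝒰⦄ ⦃f : V ⟶ U⦄ (h : S f), T h ∈ covers V) → S.bind T ∈ covers U

/-- An `R`-linear fibered category on a base category `𝒰`, presented as a pseudofunctor:
`R`-linear categories `Fib U`, `R`-linear restriction functors `res i : Fib U ⥤ Fib V`
for `i : V ⟶ U`, and natural isomorphisms `τ` satisfying the cocycle condition. -/
structure LinearFibered (R : Type u₀) [CommRing R] (𝒰 : Type u₁) [Category.{v₁} 𝒰] where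
  Fib : 𝒰 → Type u₂
  [cat : ∀ U, Category.{v₂} (Fib U)]
  [preadd : ∀ U, Preadditive (Fib U)]
  [lin : ∀ U, CategoryTheory.Linear R (Fib U)]
  res : ∀ {V U : 𝒰}, (V ⟶ U) → (Fib U ⥤ Fib V)
  [resAdditive : ∀ {V U : 𝒰} (i : V ⟶ U), (res i).Additive]
  [resLinear : ∀ {V U : 𝒰} (i : V ⟶ U), (res i).Linear R]
  τ : ∀ {W V U : 𝒰} (j : W ⟶ V) (i : V ⟶ U), res (j ≫ i) ≅ res i ⋙ res j
  cocycle : ∀ {Z W V U : 𝒰} (k : Z ⟶ W) (j : W ⟶ V) (i : V ⟶ U),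
    (τ (k ≫ j) i).hom ≫ Functor.whiskerLeft (res i) (τ k j).hom =
      eqToHom (by rw [Category.assoc]) ≫ (τ k (j ≫ i)).hom ≫
        Functor.whiskerRight (τ j i).hom (res k)

attribute [instance] LinearFibered.cat LinearFibered.preadd LinearFibered.lin
  LinearFibered.resAdditive LinearFibered.resLinear

variable {R : Type u₀} [CommRing R] {𝒰 : Type u₁} [Category.{v₁} 𝒰]

/-- A morphism `p : ℬ ⟶ 𝒜` of `R`-linear fibered categories: `R`-linear functors
`p.app U : ℬ(U) ⥤ 𝒜(U)` together with natural isomorphisms `p.comm i` commuting with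
the restriction functors, compatibly with the `τ`'s. -/
structure FiberedMor (ℬ 𝒜 : LinearFibered.{v₂, u₂} R 𝒰) where
  app : ∀ U : 𝒰, ℬ.Fib U ⥤ 𝒜.Fib U
  [appAdditive : ∀ U : 𝒰, (app U).Additive]
  [appLinear : ∀ U : 𝒰, (app U).Linear R]
  comm : ∀ {V U : 𝒰} (i : V ⟶ U), ℬ.res i ⋙ app V ≅ app U ⋙ 𝒜.res i
  comm_comp : ∀ {W V U : 𝒰} (j : W ⟶ V) (i : V ⟶ U),
    Functor.whiskerRight (ℬ.τ j i).hom (app W) ≫ Functor.whiskerLeft (ℬ.res i) (comm j).hom ≫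
        Functor.whiskerRight (comm i).hom (𝒜.res j) =
      (comm (j ≫ i)).hom ≫ Functor.whiskerLeft (app U) (𝒜.τ j i).hom

attribute [instance] FiberedMor.appAdditive FiberedMor.appLinear

namespace FiberedMor

variable {ℬ 𝒜 : LinearFibered.{v₂, u₂} R 𝒰} (p : FiberedMor ℬ 𝒜)

/-- The canonical identification `p(B|_V|_W) ≅ p(B)|_V|_W`. -/
def ident {U V W : 𝒰} (i : V ⟶ U) (g : W ⟶ V) (B : ℬ.Fib U) :
    (p.app W).obj ((ℬ.res g).obj ((ℬ.res i).obj B)) ≅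
      (𝒜.res g).obj ((𝒜.res i).obj ((p.app U).obj B)) :=
  (p.comm g).app ((ℬ.res i).obj B) ≪≫ (𝒜.res g).mapIso ((p.comm i).app B)

variable (𝒯 : CoveringSystem 𝒰)

/-- Condition (G): `p` is locally surjective on objects. -/
def SatisfiesG : Prop :=
  ∀ (U : 𝒰) (A : 𝒜.Fib U), ∃ S ∈ 𝒯.covers U, ∀ ⦃V : 𝒰⦄ ⦃f : V ⟶ U⦄, S f →
    ∃ B : ℬ.Fib V, Nonempty ((p.app V).obj B ≅ (𝒜.res f).obj A)

/-- Condition (F): for `B, B' ∈ ℬ(U)` and a morphism `a : p(B)|_V ⟶ p(B')|_V` in `𝒜(V)`,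
locally on a covering of `V` the morphism `a` comes from `ℬ` (under the canonical
identifications). -/
def SatisfiesF : Prop :=
  ∀ ⦃U V : 𝒰⦄ (B B' : ℬ.Fib U) (i : V ⟶ U)
    (a : (𝒜.res i).obj ((p.app U).obj B) ⟶ (𝒜.res i).obj ((p.app U).obj B')),
    ∃ S ∈ 𝒯.covers V, ∀ ⦃W : 𝒰⦄ ⦃g : W ⟶ V⦄, S g →
      ∃ b : (ℬ.res g).obj ((ℬ.res i).obj B) ⟶ (ℬ.res g).obj ((ℬ.res i).obj B'),
        (p.app W).map b ≫ (p.ident i g B').hom = (p.ident i g B).hom ≫ (𝒜.res g).map a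

/-- Condition (FF): for `B, B' ∈ ℬ(U)` and `b : B|_V ⟶ B'|_V` with `p(b) = 0`, the
morphism `b` vanishes locally on a covering of `V`. -/
def SatisfiesFF : Prop :=
  ∀ ⦃U V : 𝒰⦄ (B B' : ℬ.Fib U) (i : V ⟶ U)
    (b : (ℬ.res i).obj B ⟶ (ℬ.res i).obj B'), (p.app V).map b = 0 →
    ∃ S ∈ 𝒯.covers V, ∀ ⦃W : 𝒰⦄ ⦃g : W ⟶ V⦄, S g → (ℬ.res g).map b = 0

/-- `p` locally reflects isomorphisms. -/
def LocallyReflectsIsos : Prop :=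
  ∀ ⦃U : 𝒰⦄ ⦃B B' : ℬ.Fib U⦄ (b : B ⟶ B'), IsIso ((p.app U).map b) →
    ∃ S ∈ 𝒯.covers U, ∀ ⦃V : 𝒰⦄ ⦃f : V ⟶ U⦄, S f → IsIso ((ℬ.res f).map b)

end FiberedMor

/-- An `R`-linear fibered category `𝒜` on a site `(𝒰, 𝒯)` is algebroid if (1) every `U`
admits a covering with nonempty fibers and (2) any two objects of a fiber are locally
isomorphic. -/
def LinearFibered.IsAlgebroid (𝒜 : LinearFibered.{v₂, u₂} R 𝒰)
    (𝒯 : CoveringSystem 𝒰) : Prop :=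
  (∀ U : 𝒰, ∃ S ∈ 𝒯.covers U, ∀ ⦃V : 𝒰⦄ ⦃f : V ⟶ U⦄, S f → Nonempty (𝒜.Fib V)) ∧
  (∀ (U : 𝒰) (A A' : 𝒜.Fib U), ∃ S ∈ 𝒯.covers U, ∀ ⦃V : 𝒰⦄ ⦃f : V ⟶ U⦄, S f →
    Nonempty ((𝒜.res f).obj A ≅ (𝒜.res f).obj A'))

/-
Over a cover on which `p(B)` and `p(B')` become isomorphic, (F) lifts the isomorphism and its
inverse to morphisms of `ℬ`, after refining the cover; the two composites are sent by `p` to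
identities, so by (FF) they are identities after refining once more. Nonemptiness of the fibres
of `ℬ` comes from that of `𝒜` and (G) in the same way. Every refinement is an instance of
transitivity of coverings.
-/

namespace CoveringSystem

variable (𝒯 : CoveringSystem 𝒰)

def Locally {U : 𝒰} (P : ∀ ⦃V : 𝒰⦄, (V ⟶ U) → Prop) : Prop :=
  ∃ S ∈ 𝒯.covers U, ∀ ⦃V : 𝒰⦄ ⦃f : V ⟶ U⦄, S f → P f

variable {𝒯} {U : 𝒰} {P Q : ∀ ⦃V : 𝒰⦄, (V ⟶ U) → Prop}

theorem Locally.mono (h : 𝒯.Locally P) (hPQ : ∀ ⦃V : 𝒰⦄ ⦃f : V ⟶ U⦄, P f → Q f) :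
    𝒯.Locally Q := by
  obtain ⟨S, hS, hP⟩ := h
  exact ⟨S, hS, fun V f hf => hPQ (hP hf)⟩

theorem Locally.bind
    (h : 𝒯.Locally fun V (f : V ⟶ U) => 𝒯.Locally fun W (g : W ⟶ V) => P (g ≫ f)) :
    𝒯.Locally P := by
  obtain ⟨S, hS, hT⟩ := h
  choose T hT hP using hT
  refine ⟨S.bind T, 𝒯.bind_mem S hS T hT, ?_⟩
  rintro W _ ⟨V, g, f, hf, hg, rfl⟩
  exact hP hf hg

end CoveringSystem

namespace LinearFibered

variable (ℬ : LinearFibered.{v₂, u₂} R 𝒰) {U V W : 𝒰} (f : V ⟶ U) (g : W ⟶ V)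

theorem isIso_res_comp_map {X Y : ℬ.Fib U} (b : X ⟶ Y)
    [IsIso ((ℬ.res g).map ((ℬ.res f).map b))] : IsIso ((ℬ.res (g ≫ f)).map b) := by
  rw [← NatIso.naturality_2 (ℬ.τ g f) b]
  dsimp
  infer_instance

theorem nonempty_iso_res_comp {X Y : ℬ.Fib U}
    (e : Nonempty ((ℬ.res g).obj ((ℬ.res f).obj X) ≅ (ℬ.res g).obj ((ℬ.res f).obj Y))) :
    Nonempty ((ℬ.res (g ≫ f)).obj X ≅ (ℬ.res (g ≫ f)).obj Y) :=
  e.map fun e => (ℬ.τ g f).app X ≪≫ e ≪≫ ((ℬ.τ g f).app Y).symm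

end LinearFibered

namespace FiberedMor

variable {ℬ 𝒜 : LinearFibered.{v₂, u₂} R 𝒰} (p : FiberedMor ℬ 𝒜) {𝒯 : CoveringSystem 𝒰}
  {U V W : 𝒰}

theorem map_res_map (g : W ⟶ V) {X Y : ℬ.Fib V} (b : X ⟶ Y) :
    (p.app W).map ((ℬ.res g).map b) =
      (p.comm g).hom.app X ≫ (𝒜.res g).map ((p.app V).map b) ≫ (p.comm g).inv.app Y :=
  (NatIso.naturality_2 (p.comm g) b).symm

variable {p}

theorem SatisfiesF.locally_exists_map_eq (hF : p.SatisfiesF 𝒯) (B B' : ℬ.Fib U) (i : V ⟶ U)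
    (a : (p.app V).obj ((ℬ.res i).obj B) ⟶ (p.app V).obj ((ℬ.res i).obj B')) :
    𝒯.Locally fun W (g : W ⟶ V) =>
      ∃ c : (ℬ.res g).obj ((ℬ.res i).obj B) ⟶ (ℬ.res g).obj ((ℬ.res i).obj B'),
        (p.app W).map c = (p.comm g).hom.app _ ≫ (𝒜.res g).map a ≫ (p.comm g).inv.app _ := by
  obtain ⟨S, hS, hc⟩ := hF B B' i ((p.comm i).inv.app B ≫ a ≫ (p.comm i).hom.app B')
  refine ⟨S, hS, fun W g hg => ?_⟩
  obtain ⟨c, hc⟩ := hc hg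
  refine ⟨c, ?_⟩
  rw [← cancel_mono (p.ident i g B').hom, hc]
  simp [ident]

theorem SatisfiesFF.locally_res_map_eq (hFF : p.SatisfiesFF 𝒯) {B B' : ℬ.Fib U} (i : V ⟶ U)
    {x y : (ℬ.res i).obj B ⟶ (ℬ.res i).obj B'} (h : (p.app V).map x = (p.app V).map y) :
    𝒯.Locally fun W (g : W ⟶ V) => (ℬ.res g).map x = (ℬ.res g).map y := by
  refine CoveringSystem.Locally.mono (hFF B B' i (x - y) (by rw [Functor.map_sub, h, sub_self]))
    fun W g hg => ?_
  rwa [Functor.map_sub, sub_eq_zero] at hg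

theorem SatisfiesFF.locally_isIso_res_map (hFF : p.SatisfiesFF 𝒯) {B B' : ℬ.Fib U}
    {i : V ⟶ U} (x : (ℬ.res i).obj B ⟶ (ℬ.res i).obj B')
    (y : (ℬ.res i).obj B' ⟶ (ℬ.res i).obj B)
    (hxy : (p.app V).map (x ≫ y) = 𝟙 _) (hyx : (p.app V).map (y ≫ x) = 𝟙 _) :
    𝒯.Locally fun W (g : W ⟶ V) => IsIso ((ℬ.res g).map x) := by
  refine CoveringSystem.Locally.bind <|
    (hFF.locally_res_map_eq i (hxy.trans ((p.app V).map_id _).symm)).mono fun W g hxy' => ?_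
  have hyx' : (p.app W).map ((ℬ.res g).map (y ≫ x)) = (p.app W).map ((ℬ.res g).map (𝟙 _)) := by
    rw [map_res_map, map_res_map, hyx, (p.app V).map_id]
  refine (hFF.locally_res_map_eq g hyx').mono fun W' k hyx'' => ?_
  have : IsIso ((ℬ.res k).map ((ℬ.res g).map x)) :=
    ⟨(ℬ.res k).map ((ℬ.res g).map y), by simpa using congr_arg (ℬ.res k).map hxy',
      by simpa using hyx''⟩
  exact ℬ.isIso_res_comp_map g k x

theorem locally_isIso_res_map_of_isIso_map (hF : p.SatisfiesF 𝒯) (hFF : p.SatisfiesFF 𝒯)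
    {B B' : ℬ.Fib U} {i : V ⟶ U} (b : (ℬ.res i).obj B ⟶ (ℬ.res i).obj B')
    [IsIso ((p.app V).map b)] :
    𝒯.Locally fun W (g : W ⟶ V) => IsIso ((ℬ.res g).map b) := by
  refine CoveringSystem.Locally.bind <|
    (hF.locally_exists_map_eq B' B i (inv ((p.app V).map b))).mono fun W g ⟨c, hc⟩ => ?_
  refine (hFF.locally_isIso_res_map ((ℬ.res g).map b) c ?_ ?_).mono
    fun W' k _ => ℬ.isIso_res_comp_map g k b
  · rw [Functor.map_comp, map_res_map, hc]
    simp
  · rw [Functor.map_comp, map_res_map, hc]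
    simp

theorem locally_nonempty_iso_res_of_iso (hF : p.SatisfiesF 𝒯) (hFF : p.SatisfiesFF 𝒯)
    {B B' : ℬ.Fib U} (i : V ⟶ U)
    (e : (p.app V).obj ((ℬ.res i).obj B) ≅ (p.app V).obj ((ℬ.res i).obj B')) :
    𝒯.Locally fun W (g : W ⟶ V) =>
      Nonempty ((ℬ.res g).obj ((ℬ.res i).obj B) ≅ (ℬ.res g).obj ((ℬ.res i).obj B')) := by
  refine CoveringSystem.Locally.bind <|
    (hF.locally_exists_map_eq B B' i e.hom).mono fun W g ⟨c, hc⟩ => ?_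
  have : IsIso ((p.app W).map c) := by
    rw [hc]
    infer_instance
  exact (locally_isIso_res_map_of_isIso_map hF hFF c).mono
    fun W' k _ => ℬ.nonempty_iso_res_comp g k ⟨asIso ((ℬ.res k).map c)⟩

end FiberedMor

open FiberedMor CoveringSystem in
theorem statement6 {R : Type u₀} [CommRing R] {𝒰 : Type u₁} [Category.{v₁} 𝒰]
    (𝒯 : CoveringSystem 𝒰) {ℬ 𝒜 : LinearFibered.{v₂, u₂} R 𝒰} (p : FiberedMor ℬ 𝒜)
    (hG : p.SatisfiesG 𝒯) (hF : p.SatisfiesF 𝒯) (hFF : p.SatisfiesFF 𝒯)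
    (h𝒜 : 𝒜.IsAlgebroid 𝒯) :
    ℬ.IsAlgebroid 𝒯 := by
  constructor
  · intro U
    refine Locally.bind <| Locally.mono (h𝒜.1 U) fun V f ⟨A⟩ => ?_
    exact Locally.mono (hG V A) fun W g ⟨B, _⟩ => ⟨B⟩
  · intro U B B'
    refine Locally.bind <|
      Locally.mono (h𝒜.2 U ((p.app U).obj B) ((p.app U).obj B')) fun V f ⟨a⟩ => ?_
    exact (locally_nonempty_iso_res_of_iso hF hFF f
      ((p.comm f).app B ≪≫ a ≪≫ ((p.comm f).app B').symm)).mono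
      fun W g e => ℬ.nonempty_iso_res_comp f g e
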